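/- Define w'(z) := ⌈cn_{z⋄}(z)⌉ for every z ∈ M. Then w' is a feasible machine configuration for 𝒥, and its cost satisfies ∑_{z ∈ M} w'(z)·r(z) ≤ (8/7)·∑_{z ∈ T(z⋄)} cn_{z⋄}(z)·r(z). -/

import Mathlib

open scoped Classical
open Finset MeasureTheory

namespace BSHM

noncomputable section

/-- The set of candidate parents of machine type `i`: types `j ∈ M` with `j > i`
and a strictly smaller normalized cost rate per capacity unit. -/
def pset (m : ℕ) (g r : ℕ → ℝ) (i : ℕ) : Set ℕ :=
  {j | j ≤ m ∧ i < j ∧ r j / g j < r i / g i}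

/-- The parent `p i` of machine type `i` (equal to `0` when the parent is undefined,
since any actual parent has index `≥ 2`). -/
def p (m : ℕ) (g r : ℕ → ℝ) (i : ℕ) : ℕ := sInf (pset m g r i)

/-- `pdef i` asserts that the parent of `i` is defined. -/
def pdef (m : ℕ) (g r : ℕ → ℝ) (i : ℕ) : Prop := (pset m g r i).Nonempty

/-- One step of the parent relation: `b` is the (defined) parent of `a`. -/
def pstep (m : ℕ) (g r : ℕ → ℝ) (a b : ℕ) : Prop :=
  pdef m g r a ∧ b = p m g r a

/-- `P i`: the set consisting of `i` together with all of its iterated parents. -/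
def P (m : ℕ) (g r : ℕ → ℝ) (i : ℕ) : Set ℕ :=
  {z | Relation.ReflTransGen (pstep m g r) i z}

/-- `A i`: the set of nodes in the tree rooted at `i`,
i.e. all `z ∈ M` having `i` as an ancestor (or equal to `i`). -/
def A (m : ℕ) (g r : ℕ → ℝ) (i : ℕ) : Set ℕ :=
  {z | 1 ≤ z ∧ z ≤ m ∧ i ∈ P m g r z}

/-- `v i`: the lowest-indexed node in the tree rooted at `i`. -/
def v (m : ℕ) (g r : ℕ → ℝ) (i : ℕ) : ℕ := sInf (A m g r i)

/-- `y i`: the younger siblings of `i` (same parent status, smaller index). -/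
def y (m : ℕ) (g r : ℕ → ℝ) (i : ℕ) : Set ℕ :=
  {z | 1 ≤ z ∧ z ≤ m ∧ z < i ∧ p m g r z = p m g r i}

/-- `esib i`: the elder siblings of `i`. -/
def esib (m : ℕ) (g r : ℕ → ℝ) (i : ℕ) : Set ℕ :=
  {z | 1 ≤ z ∧ z ≤ m ∧ i < z ∧ p m g r z = p m g r i}

/-- `T k := {k} ∪ ⋃_{z ∈ P(k)} y(z)`. -/
def T (m : ℕ) (g r : ℕ → ℝ) (k : ℕ) : Set ℕ :=
  {k} ∪ ⋃ z ∈ P m g r k, y m g r z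

/-- `T k` as a `Finset` (all relevant nodes lie in `{k} ∪ [1, m]`). -/
def TIcc (m : ℕ) (g r : ℕ → ℝ) (k : ℕ) : Finset ℕ :=
  (insert k (Finset.Icc 1 m)).filter (fun z => z ∈ T m g r k)

/-! ### Jobs and one-shot scheduling -/

variable {ι : Type*}

/-- The exact machine type of a job `J`: the least `z ∈ M` with `s J ≤ g z`. -/
def mty (m : ℕ) (g : ℕ → ℝ) (s : ι → ℝ) (J : ι) : ℕ :=
  sInf {z | 1 ≤ z ∧ z ≤ m ∧ s J ≤ g z}

/-- Total size of a finite set of jobs. -/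
def Ssum (s : ι → ℝ) (W : Finset ι) : ℝ := ∑ J ∈ W, s J

/-- `k0f X`: the highest-indexed exact machine type among the jobs of `X`. -/
def k0f (m : ℕ) (g : ℕ → ℝ) (s : ι → ℝ) (X : Finset ι) : ℕ :=
  X.sup (fun J => mty m g s J)

/-- `H z X`: the jobs of `X` whose exact machine type lies in the tree rooted at `z`. -/
def H (m : ℕ) (g r : ℕ → ℝ) (s : ι → ℝ) (z : ℕ) (X : Finset ι) : Finset ι :=
  X.filter (fun J => mty m g s J ∈ A m g r z)

/-- `SH X z := S(H_z(X))`. -/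
def SH (m : ℕ) (g r : ℕ → ℝ) (s : ι → ℝ) (X : Finset ι) (z : ℕ) : ℝ :=
  Ssum s (H m g r s z X)

/-- Feasibility of a machine configuration `w : M → ℕ` for the job set `X`. -/
def Feasible (m : ℕ) (g : ℕ → ℝ) (s : ι → ℝ) (X : Finset ι) (w : ℕ → ℕ) : Prop :=
  ∀ i, 1 ≤ i → i ≤ m →
    Ssum s (X.filter (fun J => i ≤ mty m g s J)) ≤ ∑ z ∈ Finset.Icc i m, (w z : ℝ) * g z

/-- The cost of a machine configuration. -/
def cost (m : ℕ) (r : ℕ → ℝ) (w : ℕ → ℕ) : ℝ :=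
  ∑ z ∈ Finset.Icc 1 m, (w z : ℝ) * r z

/-- The optimal one-shot scheduling cost for a job set `X`. -/
def OPT1 (m : ℕ) (g r : ℕ → ℝ) (s : ι → ℝ) (X : Finset ι) : ℝ :=
  sInf {c : ℝ | ∃ w : ℕ → ℕ, Feasible m g s X w ∧ c = cost m r w}

/-- The fractional machine configuration `cn_{z*}` for the job set `X`, with
highest-indexed machine type `zs`.  A node `i ∈ T(zs) \ {zs}` is the boundary
type `i*` exactly when `∑_{z ∈ T(zs), z > i} S(H_z) ≤ cn(zs)·g(zs) <
∑_{z ∈ T(zs), z ≥ i} S(H_z)`; nodes above the boundary get `0`,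
nodes below it get `S(H_i)/g_i`. -/
def cn (m : ℕ) (g r : ℕ → ℝ) (s : ι → ℝ) (X : Finset ι) (zs i : ℕ) : ℝ :=
  let B : ℝ := (⌈SH m g r s X zs / g zs⌉₊ : ℝ) * g zs
  let Sge : ℝ := ∑ z ∈ (TIcc m g r zs).filter (fun z => i ≤ z), SH m g r s X z
  let Sgt : ℝ := ∑ z ∈ (TIcc m g r zs).filter (fun z => i < z), SH m g r s X z
  if i = zs then (⌈SH m g r s X zs / g zs⌉₊ : ℝ)
  else if i ∈ T m g r zs then
    (if Sgt ≤ B ∧ B < Sge then (Sge - B) / g i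
     else if B < Sgt then SH m g r s X i / g i
     else 0)
  else 0

/-- `cn_{zs}` is decent: for every strict ancestor `zt` of `zs`, the total cost of
the machines of types in `T(zs) ∩ A(zt)` is at most the cost of one type-`zt` machine. -/
def decent (m : ℕ) (g r : ℕ → ℝ) (s : ι → ℝ) (X : Finset ι) (zs : ℕ) : Prop :=
  ∀ zt ∈ P m g r zs, zt ≠ zs →
    (∑ z ∈ (TIcc m g r zs).filter (fun z => z ∈ A m g r zt), cn m g r s X zs z * r z) ≤ r zt

/-- `z⋄(X)`: the least `z* ∈ P(k0(X))` such that `cn_{z*}` is decent. -/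
def zdia (m : ℕ) (g r : ℕ → ℝ) (s : ι → ℝ) (X : Finset ι) : ℕ :=
  sInf {zs | zs ∈ P m g r (k0f m g s X) ∧ decent m g r s X zs}

/-- The child of `zd` whose subtree contains node `k`. -/
def chil (m : ℕ) (g r : ℕ → ℝ) (zd k : ℕ) : ℕ :=
  sInf {i | p m g r i = zd ∧ k ∈ A m g r i}

/-- The node `i ∈ T(zd)` whose subtree contains node `k`. -/
def idxT (m : ℕ) (g r : ℕ → ℝ) (zd k : ℕ) : ℕ :=
  sInf {i | i ∈ T m g r zd ∧ k ∈ A m g r i}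

/-- The children `f(zd)` of node `zd`, as a `Finset`. -/
def fchFin (m : ℕ) (g r : ℕ → ℝ) (zd : ℕ) : Finset ℕ :=
  (Finset.Icc 1 m).filter (fun z => p m g r z = zd)

/-- The cost `r̃(X)(J)` charged to the job `J` of the job set `X`. -/
def charge (m : ℕ) (g r : ℕ → ℝ) (s : ι → ℝ) (X : Finset ι) (J : ι) : ℝ :=
  let zd := zdia m g r s X
  let ρ : ℕ → ℝ := fun i => r i / g i
  let Hh := X.filter (fun J' => mty m g s J' = zd)
  let c : ℝ := Ssum s Hh * ρ zd + ∑ i ∈ fchFin m g r zd, SH m g r s X i * ρ i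
  if mty m g s J ∈ A m g r zd then
    if g zd ≤ SH m g r s X zd then s J * ρ zd
    else if r zd < c then
      if mty m g s J = zd then s J * ρ zd
      else
        s J * (ρ (chil m g r zd (mty m g s J)) -
          (ρ (chil m g r zd (mty m g s J)) - ρ zd) *
            ((c - r zd) /
              (∑ i ∈ fchFin m g r zd, ∑ J' ∈ H m g r s i X, s J' * (ρ i - ρ zd))))
    else
      if mty m g s J = zd then s J * ρ zd * (1 + (r zd - c) / (Ssum s Hh * ρ zd))
      else s J * ρ (chil m g r zd (mty m g s J))
  else s J * ρ (idxT m g r zd (mty m g s J))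

end

end BSHM

/-!
Every job has a type `t ≤ k₀ ≤ z⋄`, and `t` lies in the subtree `A j` of some `j ∈ T(z⋄)`
with `j ≥ t`; so the volume of the jobs of type `≥ i` is at most the tail sum
`∑_{j ∈ T(z⋄), j ≥ i} S(H_j)`. The configuration `cn_{z⋄}` puts capacity
`B = cn(z⋄)·g(z⋄) ≥ S(H_{z⋄})` at `z⋄` and fills the other types of `T(z⋄)` greedily from the top:
`cn(z)·g(z) = (S_{≥z} − B)⁺ − (S_{>z} − B)⁺`. This telescopes, so the capacity at types `≥ i`
covers the tail sum, and rounding up keeps feasibility. Rounding changes only the types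
`z ≠ z⋄`, each by less than one machine of cost `r(z)`; these are distinct powers of `8` below
`r(z⋄)`, so the extra cost is below `r(z⋄)/7 ≤ cn(z⋄)·r(z⋄)/7`.
-/

namespace BSHM

section TailSum

def tailSum (T : Finset ℕ) (f : ℕ → ℝ) (i : ℕ) : ℝ := ∑ z ∈ T.filter (i ≤ ·), f z

variable {T : Finset ℕ} {f : ℕ → ℝ}

lemma tailSum_eq_add_succ (T : Finset ℕ) (f : ℕ → ℝ) (i : ℕ) :
    tailSum T f i = (if i ∈ T then f i else 0) + tailSum T f (i + 1) := by
  simp only [tailSum, Finset.sum_filter, ← Finset.sum_ite_eq' T i f, ← Finset.sum_add_distrib]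
  refine Finset.sum_congr rfl fun z _ => ?_
  split_ifs <;> first | omega | simp

lemma tailSum_eq_zero {i : ℕ} (h : ∀ z ∈ T, z < i) : tailSum T f i = 0 :=
  Finset.sum_eq_zero fun z hz => absurd (Finset.mem_filter.mp hz) fun ⟨hzT, hiz⟩ =>
    (h z hzT).not_ge hiz

lemma tailSum_succ_le (hf : ∀ z ∈ T, 0 ≤ f z) (i : ℕ) : tailSum T f (i + 1) ≤ tailSum T f i := by
  rw [tailSum_eq_add_succ T f i]
  split_ifs with hi
  · linarith [hf i hi]
  · rw [zero_add]

lemma tailSum_telescope (T : Finset ℕ) (a : ℕ → ℝ) (φ : ℝ → ℝ) (i : ℕ) :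
    tailSum T (fun z => φ (tailSum T a z) - φ (tailSum T a (z + 1))) i
      = φ (tailSum T a i) - φ 0 := by
  obtain ⟨N, hN⟩ : ∃ N, ∀ z ∈ T, z < N :=
    ⟨T.sup id + 1, fun z hz => Nat.lt_succ_of_le (Finset.le_sup (f := id) hz)⟩
  suffices ∀ n i, N ≤ i + n → tailSum T (fun z => φ (tailSum T a z) - φ (tailSum T a (z + 1))) i
      = φ (tailSum T a i) - φ 0 from this N i (by omega)
  intro n
  induction n with
  | zero =>
    intro i hi
    have hT : ∀ z ∈ T, z < i := fun z hz => by have := hN z hz; omega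
    rw [tailSum_eq_zero hT, tailSum_eq_zero hT, sub_self]
  | succ n ih =>
    intro i hi
    rw [tailSum_eq_add_succ, ih (i + 1) (by omega), tailSum_eq_add_succ T a i]
    split_ifs <;> simp

lemma le_tailSum_of_fill {a c : ℕ → ℝ} {k : ℕ} (hk : k ∈ T) (hT : ∀ z ∈ T, z ≤ k)
    (hck : 0 ≤ c k) (hak : a k ≤ c k)
    (hc : ∀ z ∈ T, z ≠ k →
      c z = max (tailSum T a z - c k) 0 - max (tailSum T a (z + 1) - c k) 0) (i : ℕ) :
    tailSum T a i ≤ tailSum T c i := by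
  set φ : ℝ → ℝ := fun x => max (x - c k) 0
  have hT' : ∀ z ∈ T, z < k + 1 := fun z hz => Nat.lt_succ_of_le (hT z hz)
  have hc' : ∀ z ∈ T,
      c z = (φ (tailSum T a z) - φ (tailSum T a (z + 1))) + if z = k then c k else 0 := by
    intro z hz
    by_cases hzk : z = k
    · subst hzk
      rw [tailSum_eq_add_succ, if_pos hz, tailSum_eq_zero hT']
      simp [φ, hak, hck]
    · rw [hc z hz hzk, if_neg hzk, add_zero]
  have hpeak : tailSum T (fun z => if z = k then c k else 0) i = if i ≤ k then c k else 0 := by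
    simp only [tailSum, Finset.sum_ite_eq', Finset.mem_filter, hk, true_and]
  have hsplit : tailSum T c i = (φ (tailSum T a i) - φ 0) + if i ≤ k then c k else 0 := by
    rw [← tailSum_telescope T a φ i, ← hpeak, tailSum, tailSum, tailSum, ← Finset.sum_add_distrib]
    exact Finset.sum_congr rfl fun z hz => hc' z (Finset.mem_filter.mp hz).1
  have hφ0 : φ 0 = 0 := by simp [φ, hck]
  rw [hsplit, hφ0, sub_zero]
  split_ifs with hik
  · linarith [le_max_left (tailSum T a i - c k) 0]
  · rw [tailSum_eq_zero fun z hz => by have := hT z hz; omega, hφ0, add_zero]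

end TailSum

lemma sum_le_zpow_div_of_forall_eq_zpow {b : ℝ} (hb : 1 < b) (S : Finset ℝ)
    (hS : ∀ x ∈ S, ∃ e : ℤ, x = b ^ e) (N : ℤ) (hN : ∀ x ∈ S, x < b ^ N) :
    ∑ x ∈ S, x ≤ b ^ N / (b - 1) := by
  induction S using Finset.induction_on_max generalizing N with
  | empty => simp only [Finset.sum_empty]; exact div_nonneg (by positivity) (by linarith)
  | insert x S hxS ih =>
    obtain ⟨e, rfl⟩ := hS _ (Finset.mem_insert_self _ _)
    have heN : e + 1 ≤ N := Int.add_one_le_of_lt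
      ((zpow_lt_zpow_iff_right₀ hb).mp (hN _ (Finset.mem_insert_self _ _)))
    have hS' := ih (fun y hy => hS y (Finset.mem_insert_of_mem hy)) e hxS
    have hb1 : 0 < b - 1 := by linarith
    calc ∑ y ∈ insert (b ^ e) S, y = b ^ e + ∑ y ∈ S, y :=
          Finset.sum_insert fun h => (hxS _ h).false
      _ ≤ b ^ e + b ^ e / (b - 1) := by linarith
      _ = b ^ (e + 1) / (b - 1) := by
          rw [zpow_add_one₀ (by positivity)]; field_simp; ring
      _ ≤ b ^ N / (b - 1) := by
          gcongr
          exact hb.le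

lemma sum_biUnion_le_sum_sum {α β : Type*} [DecidableEq β] (F : Finset α) (t : α → Finset β)
    {f : β → ℝ} (hf : ∀ x ∈ F.biUnion t, 0 ≤ f x) :
    ∑ x ∈ F.biUnion t, f x ≤ ∑ a ∈ F, ∑ x ∈ t a, f x := by
  calc ∑ x ∈ F.biUnion t, f x
      ≤ ∑ x ∈ F.biUnion t, ∑ a ∈ F, if x ∈ t a then f x else 0 := by
        refine Finset.sum_le_sum fun x hx => ?_
        obtain ⟨a, ha, hxa⟩ := Finset.mem_biUnion.mp hx
        calc f x = if x ∈ t a then f x else 0 := (if_pos hxa).symm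
          _ ≤ _ := Finset.single_le_sum (f := fun a => if x ∈ t a then f x else 0)
              (fun a _ => by split_ifs; exacts [hf x hx, le_rfl]) ha
    _ = ∑ a ∈ F, ∑ x ∈ t a, f x := by
        rw [Finset.sum_comm]
        refine Finset.sum_congr rfl fun a ha => ?_
        rw [← Finset.sum_filter]
        congr 1
        ext x
        simp only [Finset.mem_filter, Finset.mem_biUnion]
        exact ⟨fun h => h.2, fun h => ⟨⟨a, ha, h⟩, h⟩⟩

section Tree

variable {m : ℕ} {g r : ℕ → ℝ} {i j k t w x z : ℕ}

lemma p_mem_pset (h : pdef m g r i) : p m g r i ∈ pset m g r i := Nat.sInf_mem h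

lemma lt_p (h : pdef m g r i) : i < p m g r i := (p_mem_pset h).2.1

lemma p_eq_zero (h : ¬ pdef m g r i) : p m g r i = 0 := by
  simp [p, Set.not_nonempty_iff_eq_empty.mp h]

lemma pdef_of_p_pos (h : 0 < p m g r i) : pdef m g r i := by
  by_contra hnd
  rw [p_eq_zero hnd] at h
  exact h.false

lemma pdef_of_p_eq (hi : pdef m g r i) (hp : p m g r i = p m g r j) : pdef m g r j :=
  pdef_of_p_pos (hp ▸ (lt_p hi).trans_le' (Nat.zero_le i))

-- The intervals `[i, p i]` are nested.
lemma pdef_and_p_le_of_lt_of_lt_p (hi : pdef m g r i) (hij : i < j) (hjp : j < p m g r i) :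
    pdef m g r j ∧ p m g r j ≤ p m g r i := by
  have hp := p_mem_pset hi
  have hrho : r i / g i ≤ r j / g j := by
    by_contra h
    exact hjp.not_ge (Nat.sInf_le ⟨hjp.le.trans hp.1, hij, lt_of_not_ge h⟩)
  have hmem : p m g r i ∈ pset m g r j := ⟨hp.1, hjp, hp.2.2.trans_le hrho⟩
  exact ⟨⟨_, hmem⟩, Nat.sInf_le hmem⟩

lemma le_of_mem_P (h : j ∈ P m g r i) : i ≤ j := by
  induction h with
  | refl => exact le_rfl
  | tail _ hstep ih => exact ih.trans (hstep.2 ▸ lt_p hstep.1).le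

lemma p_mem_P (h : j ∈ P m g r i) (hj : pdef m g r j) : p m g r j ∈ P m g r i :=
  Relation.ReflTransGen.tail h ⟨hj, rfl⟩

lemma eq_or_mem_Icc_of_mem_P (h : j ∈ P m g r i) : j = i ∨ (1 ≤ j ∧ j ≤ m) := by
  rcases Relation.ReflTransGen.cases_tail h with h | ⟨x, _, hx, rfl⟩
  · exact Or.inl h
  · have := p_mem_pset hx
    exact Or.inr ⟨by have := this.2.1; omega, this.1⟩

lemma pdef_and_mem_P_p (h : j ∈ P m g r i) (hne : j ≠ i) :
    pdef m g r i ∧ j ∈ P m g r (p m g r i) := by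
  rcases Relation.ReflTransGen.cases_head h with h | ⟨x, hx, hxj⟩
  · exact absurd h.symm hne
  · exact ⟨hx.1, hx.2 ▸ hxj⟩

lemma mem_P_of_mem_P_of_le (hj : j ∈ P m g r k) (hi : i ∈ P m g r k) (hij : i ≤ j) :
    j ∈ P m g r i := by
  have hru : Relator.RightUnique (pstep m g r) := fun _ _ _ hu hv => hu.2.trans hv.2.symm
  rcases Relation.ReflTransGen.total_of_right_unique hru hi hj with h | h
  · exact h
  · obtain rfl : j = i := le_antisymm hij (le_of_mem_P h) |>.symm
    exact Relation.ReflTransGen.refl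

lemma exists_max_mem_P_lt (hkz : k < z) :
    ∃ x ∈ P m g r k, x < z ∧ ∀ b ∈ P m g r k, b < z → b ≤ x := by
  set S := {b | b ∈ P m g r k ∧ b < z}
  have hbdd : BddAbove S := ⟨z, fun b hb => hb.2.le⟩
  have hx : sSup S ∈ S := Nat.sSup_mem ⟨k, Relation.ReflTransGen.refl, hkz⟩ hbdd
  exact ⟨sSup S, hx.1, hx.2, fun b hb hbz => le_csSup hbdd ⟨hb, hbz⟩⟩

lemma exists_mem_P_not_pdef (k : ℕ) : ∃ x ∈ P m g r k, ¬ pdef m g r x := by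
  have hbdd : BddAbove (P m g r k) := ⟨max k m, fun b hb => by
    rcases eq_or_mem_Icc_of_mem_P hb with h | h <;> omega⟩
  have hx : sSup (P m g r k) ∈ P m g r k := Nat.sSup_mem ⟨k, Relation.ReflTransGen.refl⟩ hbdd
  refine ⟨_, hx, fun hd => ?_⟩
  exact (lt_p hd).not_ge (le_csSup hbdd (p_mem_P hx hd))

lemma le_p_of_forall_mem_P_lt_le (hx : pdef m g r x) (hxP : x ∈ P m g r k)
    (hmax : ∀ b ∈ P m g r k, b < z → b ≤ x) : z ≤ p m g r x := by
  by_contra! h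
  exact (lt_p hx).not_ge (hmax _ (p_mem_P hxP hx) h)

lemma not_mem_P_of_lt_of_p_eq (hzw : z < w) (hp : p m g r z = p m g r w) :
    w ∉ P m g r z := by
  intro h
  obtain ⟨hz, hwP⟩ := pdef_and_mem_P_p h hzw.ne'
  have := le_of_mem_P hwP
  have := lt_p (pdef_of_p_eq hz hp)
  omega

lemma le_of_mem_y_of_mem_P (hzy : z ∈ y m g r w) (hw : w ∈ P m g r k) : z ≤ k := by
  obtain ⟨-, -, hzw, hp⟩ := hzy
  by_contra! hkz
  have hzP : z ∉ P m g r k := fun hz =>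
    not_mem_P_of_lt_of_p_eq hzw hp (mem_P_of_mem_P_of_le hw hz hzw.le)
  obtain ⟨x, hxP, hxz, hxmax⟩ := exists_max_mem_P_lt (m := m) (g := g) (r := r) hkz
  obtain ⟨hx, hwx⟩ := pdef_and_mem_P_p (mem_P_of_mem_P_of_le hw hxP (by omega)) (by omega)
  have hzpx : z < p m g r x := (le_p_of_forall_mem_P_lt_le hx hxP hxmax).lt_of_ne
    fun h => hzP (h ▸ p_mem_P hxP hx)
  obtain ⟨hz, hpz⟩ := pdef_and_p_le_of_lt_of_lt_p hx hxz hzpx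
  have := le_of_mem_P hwx
  have := lt_p (pdef_of_p_eq hz hp)
  omega

lemma mem_T_iff : z ∈ T m g r k ↔ z = k ∨ ∃ w ∈ P m g r k, z ∈ y m g r w := by
  simp [T]

lemma mem_T_self (k : ℕ) : k ∈ T m g r k := mem_T_iff.mpr (Or.inl rfl)

lemma le_of_mem_T (h : z ∈ T m g r k) : z ≤ k := by
  rcases mem_T_iff.mp h with rfl | ⟨w, hw, hzy⟩
  · exact le_rfl
  · exact le_of_mem_y_of_mem_P hzy hw

lemma mem_TIcc_iff (hk : k ≤ m) : z ∈ TIcc m g r k ↔ z ∈ T m g r k := by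
  refine ⟨fun h => (Finset.mem_filter.mp h).2, fun h => Finset.mem_filter.mpr ⟨?_, h⟩⟩
  rcases mem_T_iff.mp h with rfl | ⟨w, -, hz1, hzm, -⟩
  · exact Finset.mem_insert_self _ _
  · exact Finset.mem_insert_of_mem (Finset.mem_Icc.mpr ⟨hz1, hzm⟩)

lemma mem_TIcc_self (k : ℕ) : k ∈ TIcc m g r k :=
  Finset.mem_filter.mpr ⟨Finset.mem_insert_self _ _, mem_T_self k⟩

lemma le_of_mem_TIcc (h : z ∈ TIcc m g r k) : z ≤ k := le_of_mem_T (Finset.mem_filter.mp h).2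

lemma TIcc_subset_Icc (hk1 : 1 ≤ k) (hk : k ≤ m) : TIcc m g r k ⊆ Finset.Icc 1 m := by
  intro z hz
  rcases Finset.mem_insert.mp (Finset.mem_filter.mp hz).1 with rfl | h
  · exact Finset.mem_Icc.mpr ⟨hk1, hk⟩
  · exact h

lemma exists_mem_T_mem_P (ht1 : 1 ≤ t) (htm : t ≤ m) (htk : t ≤ k) :
    ∃ j ∈ T m g r k, j ∈ P m g r t := by
  by_cases hkP : k ∈ P m g r t
  · exact ⟨k, mem_T_self k, hkP⟩
  have htk' : t < k := htk.lt_of_ne fun h => hkP (h ▸ Relation.ReflTransGen.refl)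
  obtain ⟨u, huP, huk, humax⟩ := exists_max_mem_P_lt (m := m) (g := g) (r := r) htk'
  have hu : 1 ≤ u ∧ u ≤ m := by
    have := le_of_mem_P huP
    rcases eq_or_mem_Icc_of_mem_P huP with h | h <;> omega
  suffices ∃ x ∈ P m g r k, u < x ∧ p m g r u = p m g r x from
    let ⟨x, hxP, hux, hp⟩ := this
    ⟨u, mem_T_iff.mpr (Or.inr ⟨x, hxP, hu.1, hu.2, hux, hp⟩), huP⟩
  by_cases hdu : pdef m g r u
  · have hkpu : k < p m g r u := (le_p_of_forall_mem_P_lt_le hdu huP humax).lt_of_ne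
      fun h => hkP (h ▸ p_mem_P huP hdu)
    obtain ⟨x, hxP, hxpu, hxmax⟩ := exists_max_mem_P_lt (m := m) (g := g) (r := r) hkpu
    have hkx := le_of_mem_P hxP
    obtain ⟨hx, hpx⟩ := pdef_and_p_le_of_lt_of_lt_p hdu (by omega) hxpu
    exact ⟨x, hxP, by omega, le_antisymm (le_p_of_forall_mem_P_lt_le hx hxP hxmax) hpx⟩
  · obtain ⟨x, hxP, hx⟩ := exists_mem_P_not_pdef (m := m) (g := g) (r := r) k
    have := le_of_mem_P hxP
    exact ⟨x, hxP, by omega, by rw [p_eq_zero hdu, p_eq_zero hx]⟩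

end Tree

section Schedule

variable {ι : Type*} {m : ℕ} {g r : ℕ → ℝ} {s : ι → ℝ} {X : Finset ι} {zs z : ℕ}

lemma pos_of_strictMono_of_pos {f : ℕ → ℝ} (h1 : 0 < f 1)
    (hf : ∀ i j, 1 ≤ i → i < j → j ≤ m → f i < f j) (z : ℕ) (hz1 : 1 ≤ z) (hzm : z ≤ m) :
    0 < f z := by
  rcases hz1.eq_or_lt with rfl | h
  · exact h1
  · exact h1.trans (hf 1 z le_rfl h hzm)

lemma mty_mem_Icc {J : ι} (hm : 1 ≤ m) (hJ : s J ≤ g m) :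
    1 ≤ mty m g s J ∧ mty m g s J ≤ m :=
  have h := Nat.sInf_mem (s := {z | 1 ≤ z ∧ z ≤ m ∧ s J ≤ g z}) ⟨m, hm, le_rfl, hJ⟩
  ⟨h.1, h.2.1⟩

lemma zdia_mem_P : zdia m g r s X ∈ P m g r (k0f m g s X) := by
  refine (Nat.sInf_mem ?_ : zdia m g r s X ∈ {zs | _ ∧ _}).1
  obtain ⟨x, hx, hroot⟩ := exists_mem_P_not_pdef (m := m) (g := g) (r := r) (k0f m g s X)
  refine ⟨x, hx, fun zt hzt hne => absurd ?_ hne⟩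
  rcases Relation.ReflTransGen.cases_head hzt with h | ⟨_, hstep, _⟩
  · exact h.symm
  · exact absurd hstep.1 hroot

lemma SH_nonneg (hs : ∀ J ∈ X, 0 ≤ s J) (z : ℕ) : 0 ≤ SH m g r s X z :=
  Finset.sum_nonneg fun J hJ => hs J (Finset.mem_filter.mp hJ).1

lemma cn_self : cn m g r s X zs zs = ⌈SH m g r s X zs / g zs⌉₊ := by
  simp [cn]

lemma cn_of_not_mem_T (h : z ∉ T m g r zs) : cn m g r s X zs z = 0 := by
  have hne : z ≠ zs := fun hz => h (hz ▸ mem_T_self z)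
  simp [cn, h, hne]

/-- Below `zs`, the types of `T zs` are filled greedily from the top with the job volume that
`cn zs zs` machines of type `zs` leave uncovered. -/
lemma cn_mul_eq (hz : z ∈ TIcc m g r zs) (hne : z ≠ zs) (hgz : g z ≠ 0)
    (hSH : 0 ≤ SH m g r s X z) :
    cn m g r s X zs z * g z =
      max (tailSum (TIcc m g r zs) (SH m g r s X) z - cn m g r s X zs zs * g zs) 0
        - max (tailSum (TIcc m g r zs) (SH m g r s X) (z + 1) - cn m g r s X zs zs * g zs) 0 := by
  have hsplit := tailSum_eq_add_succ (TIcc m g r zs) (SH m g r s X) z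
  rw [if_pos hz] at hsplit
  have hgt : ∑ w ∈ (TIcc m g r zs).filter (fun w => z < w), SH m g r s X w
      = tailSum (TIcc m g r zs) (SH m g r s X) (z + 1) := rfl
  rw [cn_self]
  simp only [cn, if_neg hne, if_pos (Finset.mem_filter.mp hz).2, hgt]
  set B := (⌈SH m g r s X zs / g zs⌉₊ : ℝ) * g zs
  set Sge := tailSum (TIcc m g r zs) (SH m g r s X) z
  set Sgt := tailSum (TIcc m g r zs) (SH m g r s X) (z + 1)
  change (if Sgt ≤ B ∧ B < Sge then (Sge - B) / g z
      else if B < Sgt then SH m g r s X z / g z else 0) * g z = _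
  split_ifs with h1 h2
  · rw [div_mul_cancel₀ _ hgz, max_eq_left (by linarith), max_eq_right (by linarith)]
    ring
  · rw [div_mul_cancel₀ _ hgz, max_eq_left (by linarith), max_eq_left (by linarith)]
    linarith
  · have hSgt : Sgt ≤ B := not_lt.mp h2
    have hSge : Sge ≤ B := not_lt.mp fun h => h1 ⟨hSgt, h⟩
    rw [max_eq_right (by linarith), max_eq_right (by linarith)]
    ring

lemma cn_nonneg (hgpos : ∀ z, 1 ≤ z → z ≤ m → 0 < g z) (hs : ∀ J ∈ X, 0 ≤ s J)
    (hzs1 : 1 ≤ zs) (hzs : zs ≤ m) (hz : z ∈ TIcc m g r zs) : 0 ≤ cn m g r s X zs z := by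
  by_cases hne : z = zs
  · rw [hne, cn_self]
    exact Nat.cast_nonneg _
  have hz' := Finset.mem_Icc.mp (TIcc_subset_Icc hzs1 hzs hz)
  have hgz := hgpos z hz'.1 hz'.2
  refine nonneg_of_mul_nonneg_left ?_ hgz
  rw [cn_mul_eq hz hne hgz.ne' (SH_nonneg hs z), sub_nonneg]
  exact max_le_max_right 0 (sub_le_sub_right (tailSum_succ_le (fun w _ => SH_nonneg hs w) z) _)

lemma tailSum_SH_le_tailSum_cn_mul (hgpos : ∀ z, 1 ≤ z → z ≤ m → 0 < g z)
    (hs : ∀ J ∈ X, 0 ≤ s J) (hzs1 : 1 ≤ zs) (hzs : zs ≤ m) (i : ℕ) :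
    tailSum (TIcc m g r zs) (SH m g r s X) i
      ≤ tailSum (TIcc m g r zs) (fun z => cn m g r s X zs z * g z) i := by
  have hgzs := hgpos zs hzs1 hzs
  refine le_tailSum_of_fill (mem_TIcc_self zs) (fun z hz => le_of_mem_TIcc hz) ?_ ?_ ?_ i
  · rw [cn_self]
    positivity
  · rw [cn_self]
    exact (div_le_iff₀ hgzs).mp (Nat.le_ceil _)
  · intro z hz hne
    have hz' := Finset.mem_Icc.mp (TIcc_subset_Icc hzs1 hzs hz)
    exact cn_mul_eq hz hne (hgpos z hz'.1 hz'.2).ne' (SH_nonneg hs z)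

lemma Ssum_filter_le_tailSum_SH (hs : ∀ J ∈ X, 0 ≤ s J)
    (hX : ∀ J ∈ X, 1 ≤ mty m g s J ∧ mty m g s J ≤ m) (hk0 : k0f m g s X ≤ zs) (hzs : zs ≤ m)
    (i : ℕ) :
    Ssum s (X.filter fun J => i ≤ mty m g s J) ≤ tailSum (TIcc m g r zs) (SH m g r s X) i := by
  set U := ((TIcc m g r zs).filter (i ≤ ·)).biUnion fun z => H m g r s z X
  have hUX : ∀ J ∈ U, J ∈ X := fun J hJ =>
    let ⟨_, _, hJz⟩ := Finset.mem_biUnion.mp hJ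
    (Finset.mem_filter.mp hJz).1
  have hsub : X.filter (fun J => i ≤ mty m g s J) ⊆ U := by
    intro J hJ
    obtain ⟨hJX, hiJ⟩ := Finset.mem_filter.mp hJ
    obtain ⟨ht1, htm⟩ := hX J hJX
    obtain ⟨j, hjT, hjP⟩ := exists_mem_T_mem_P ht1 htm
      ((Finset.le_sup (f := fun J => mty m g s J) hJX).trans hk0)
    exact Finset.mem_biUnion.mpr ⟨j, Finset.mem_filter.mpr
      ⟨(mem_TIcc_iff hzs).mpr hjT, hiJ.trans (le_of_mem_P hjP)⟩,
      Finset.mem_filter.mpr ⟨hJX, ht1, htm, hjP⟩⟩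
  calc Ssum s (X.filter fun J => i ≤ mty m g s J) ≤ ∑ J ∈ U, s J :=
        Finset.sum_le_sum_of_subset_of_nonneg hsub fun J hJ _ => hs J (hUX J hJ)
    _ ≤ tailSum (TIcc m g r zs) (SH m g r s X) i :=
        sum_biUnion_le_sum_sum _ _ fun J hJ => hs J (hUX J hJ)

lemma tailSum_cn_mul_le_sum_ceil (hgpos : ∀ z, 1 ≤ z → z ≤ m → 0 < g z) (hzs1 : 1 ≤ zs)
    (hzs : zs ≤ m) {i : ℕ} (hi : 1 ≤ i) :
    tailSum (TIcc m g r zs) (fun z => cn m g r s X zs z * g z) i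
      ≤ ∑ z ∈ Finset.Icc i m, (⌈cn m g r s X zs z⌉₊ : ℝ) * g z := by
  have hsub : (TIcc m g r zs).filter (i ≤ ·) ⊆ Finset.Icc i m := fun z hz => by
    obtain ⟨hzT, hiz⟩ := Finset.mem_filter.mp hz
    exact Finset.mem_Icc.mpr ⟨hiz, (Finset.mem_Icc.mp (TIcc_subset_Icc hzs1 hzs hzT)).2⟩
  calc tailSum (TIcc m g r zs) (fun z => cn m g r s X zs z * g z) i
      ≤ ∑ z ∈ (TIcc m g r zs).filter (i ≤ ·), (⌈cn m g r s X zs z⌉₊ : ℝ) * g z :=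
        Finset.sum_le_sum fun z hz => by
          have hz' := Finset.mem_Icc.mp (hsub hz)
          exact mul_le_mul_of_nonneg_right (Nat.le_ceil _) (hgpos z (by omega) hz'.2).le
    _ ≤ ∑ z ∈ Finset.Icc i m, (⌈cn m g r s X zs z⌉₊ : ℝ) * g z :=
        Finset.sum_le_sum_of_subset_of_nonneg hsub fun z hz _ => by
          have hz' := Finset.mem_Icc.mp hz
          exact mul_nonneg (Nat.cast_nonneg _) (hgpos z (by omega) hz'.2).le

lemma feasible_ceil_cn (hgpos : ∀ z, 1 ≤ z → z ≤ m → 0 < g z) (hs : ∀ J ∈ X, 0 ≤ s J)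
    (hX : ∀ J ∈ X, 1 ≤ mty m g s J ∧ mty m g s J ≤ m) (hk0 : k0f m g s X ≤ zs)
    (hzs1 : 1 ≤ zs) (hzs : zs ≤ m) :
    Feasible m g s X fun z => ⌈cn m g r s X zs z⌉₊ := fun i hi _ =>
  (Ssum_filter_le_tailSum_SH hs hX hk0 hzs i).trans <|
    (tailSum_SH_le_tailSum_cn_mul hgpos hs hzs1 hzs i).trans <|
      tailSum_cn_mul_le_sum_ceil hgpos hzs1 hzs hi

lemma sum_le_div_seven_of_lt (hr : ∀ i j, 1 ≤ i → i < j → j ≤ m → r i < r j)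
    (hr8 : ∀ z, 1 ≤ z → z ≤ m → ∃ n : ℤ, r z = (8 : ℝ) ^ n) {F : Finset ℕ} {k : ℕ}
    (hF : ∀ z ∈ F, 1 ≤ z ∧ z < k) (hk1 : 1 ≤ k) (hk : k ≤ m) :
    ∑ z ∈ F, r z ≤ r k / 7 := by
  have hinj : Set.InjOn r F := by
    intro a ha b hb hab
    by_contra hne
    rcases Nat.lt_or_gt_of_ne hne with h | h
    · exact (hr a b (hF a ha).1 h (by linarith [hF b hb])).ne hab
    · exact (hr b a (hF b hb).1 h (by linarith [hF a ha])).ne hab.symm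
  obtain ⟨N, hN⟩ := hr8 k hk1 hk
  calc ∑ z ∈ F, r z = ∑ x ∈ F.image r, x := (Finset.sum_image (f := id) hinj).symm
    _ ≤ 8 ^ N / (8 - 1) := by
        refine sum_le_zpow_div_of_forall_eq_zpow (by norm_num) _ ?_ N ?_ <;>
          simp only [Finset.mem_image, forall_exists_index, and_imp, forall_apply_eq_imp_iff₂]
        · exact fun z hz => hr8 z (hF z hz).1 (by linarith [hF z hz])
        · exact fun z hz => hN ▸ hr z k (hF z hz).1 (hF z hz).2 hk
    _ = r k / 7 := by rw [hN]; norm_num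

lemma cost_ceil_cn_le (hgpos : ∀ z, 1 ≤ z → z ≤ m → 0 < g z) (hs : ∀ J ∈ X, 0 ≤ s J)
    (hr : ∀ i j, 1 ≤ i → i < j → j ≤ m → r i < r j)
    (hr8 : ∀ z, 1 ≤ z → z ≤ m → ∃ n : ℤ, r z = (8 : ℝ) ^ n) (hzs1 : 1 ≤ zs) (hzs : zs ≤ m)
    (hone : 1 ≤ cn m g r s X zs zs) :
    cost m r (fun z => ⌈cn m g r s X zs z⌉₊)
      ≤ 8 / 7 * ∑ z ∈ TIcc m g r zs, cn m g r s X zs z * r z := by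
  set F := TIcc m g r zs
  have hFIcc := TIcc_subset_Icc (g := g) (r := r) hzs1 hzs
  have hrpos : ∀ z ∈ F, 0 < r z := fun z hz => by
    obtain ⟨h1, h2⟩ := Finset.mem_Icc.mp (hFIcc hz)
    obtain ⟨n, hn⟩ := hr8 z h1 h2
    rw [hn]
    positivity
  have hcost : cost m r (fun z => ⌈cn m g r s X zs z⌉₊) = ∑ z ∈ F, ⌈cn m g r s X zs z⌉₊ * r z := by
    refine (Finset.sum_subset hFIcc fun z _ hzF => ?_).symm
    dsimp only
    rw [cn_of_not_mem_T fun h => hzF ((mem_TIcc_iff hzs).mpr h), Nat.ceil_zero, Nat.cast_zero,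
      zero_mul]
  have hround : ∑ z ∈ F, (⌈cn m g r s X zs z⌉₊ : ℝ) * r z
      ≤ ∑ z ∈ F, cn m g r s X zs z * r z + ∑ z ∈ F.erase zs, r z := by
    rw [← Finset.add_sum_erase F _ (mem_TIcc_self zs),
      ← Finset.add_sum_erase F (fun z => cn m g r s X zs z * r z) (mem_TIcc_self zs), cn_self,
      Nat.ceil_natCast, add_assoc, ← Finset.sum_add_distrib]
    gcongr with z hz
    have hzF := Finset.mem_of_mem_erase hz
    calc (⌈cn m g r s X zs z⌉₊ : ℝ) * r z ≤ (cn m g r s X zs z + 1) * r z :=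
          mul_le_mul_of_nonneg_right (Nat.ceil_lt_add_one (cn_nonneg hgpos hs hzs1 hzs hzF)).le
            (hrpos z hzF).le
      _ = cn m g r s X zs z * r z + r z := by ring
  have hsmall : ∑ z ∈ F.erase zs, r z ≤ r zs / 7 := by
    refine sum_le_div_seven_of_lt hr hr8 (fun z hz => ?_) hzs1 hzs
    have hzF := Finset.mem_of_mem_erase hz
    exact ⟨(Finset.mem_Icc.mp (hFIcc hzF)).1,
      (le_of_mem_TIcc hzF).lt_of_ne (Finset.ne_of_mem_erase hz)⟩
  have hbig : r zs ≤ ∑ z ∈ F, cn m g r s X zs z * r z :=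
    calc r zs ≤ cn m g r s X zs zs * r zs :=
          le_mul_of_one_le_left (hrpos zs (mem_TIcc_self zs)).le hone
      _ ≤ ∑ z ∈ F, cn m g r s X zs z * r z :=
        Finset.single_le_sum (fun z hz => mul_nonneg (cn_nonneg hgpos hs hzs1 hzs hz)
          (hrpos z hz).le) (mem_TIcc_self zs)
  rw [hcost]
  linarith

lemma one_le_cn_self (hg : 0 < g zs) (hs : ∀ J ∈ X, 0 ≤ s J) {J : ι} (hJ : J ∈ X)
    (hsJ : 0 < s J) (hJA : mty m g s J ∈ A m g r zs) : 1 ≤ cn m g r s X zs zs := by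
  have hSH : 0 < SH m g r s X zs := hsJ.trans_le <|
    Finset.single_le_sum (f := s) (fun J hJ => hs J (Finset.mem_filter.mp hJ).1)
      (Finset.mem_filter.mpr ⟨hJ, hJA⟩)
  rw [cn_self]
  exact_mod_cast Nat.one_le_ceil_iff.mpr (div_pos hSH hg)

end Schedule

theorem statement_11_general {ι : Type*} (m : ℕ) (g r : ℕ → ℝ) (s : ι → ℝ) (𝒥 : Finset ι)
    (hm : 1 ≤ m)
    (hg1 : 0 < g 1)
    (hg : ∀ i j, 1 ≤ i → i < j → j ≤ m → g i < g j)
    (hr : ∀ i j, 1 ≤ i → i < j → j ≤ m → r i < r j)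
    (hr8 : ∀ z, 1 ≤ z → z ≤ m → ∃ n : ℤ, r z = (8 : ℝ) ^ n)
    (hJ : 𝒥.Nonempty)
    (hs : ∀ J ∈ 𝒥, 0 < s J ∧ s J ≤ g m) :
    Feasible m g s 𝒥 (fun z => ⌈cn m g r s 𝒥 (zdia m g r s 𝒥) z⌉₊) ∧
    cost m r (fun z => ⌈cn m g r s 𝒥 (zdia m g r s 𝒥) z⌉₊)
      ≤ 8 / 7 * (∑ z ∈ TIcc m g r (zdia m g r s 𝒥),
          cn m g r s 𝒥 (zdia m g r s 𝒥) z * r z) := by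
  have hgpos := pos_of_strictMono_of_pos hg1 hg
  have hs0 : ∀ J ∈ 𝒥, 0 ≤ s J := fun J hJ => (hs J hJ).1.le
  have hX : ∀ J ∈ 𝒥, 1 ≤ mty m g s J ∧ mty m g s J ≤ m := fun J hJ => mty_mem_Icc hm (hs J hJ).2
  obtain ⟨J0, hJ0, hk0⟩ := Finset.exists_mem_eq_sup 𝒥 hJ (mty m g s)
  change k0f m g s 𝒥 = mty m g s J0 at hk0
  have hzsP : zdia m g r s 𝒥 ∈ P m g r (k0f m g s 𝒥) := zdia_mem_P
  have hk0zs := le_of_mem_P hzsP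
  have hzs1 : 1 ≤ zdia m g r s 𝒥 := (hk0 ▸ (hX J0 hJ0).1).trans hk0zs
  have hzsm : zdia m g r s 𝒥 ≤ m := by
    rcases eq_or_mem_Icc_of_mem_P hzsP with h | h
    · exact h ▸ hk0 ▸ (hX J0 hJ0).2
    · exact h.2
  have hJ0A : mty m g s J0 ∈ A m g r (zdia m g r s 𝒥) := ⟨(hX J0 hJ0).1, (hX J0 hJ0).2, hk0 ▸ hzsP⟩
  exact ⟨feasible_ceil_cn hgpos hs0 hX hk0zs hzs1 hzsm,
    cost_ceil_cn_le hgpos hs0 hr hr8 hzs1 hzsm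
      (one_le_cn_self (hgpos _ hzs1 hzsm) hs0 hJ0 (hs J0 hJ0).1 hJ0A)⟩

/-- Define `w' z := ⌈cn_{z⋄}(z)⌉` for every `z ∈ M`.  Then `w'`
is a feasible machine configuration for `𝒥`, and its cost satisfies
`∑_{z ∈ M} w' z · r z ≤ (8/7)·∑_{z ∈ T(z⋄)} cn_{z⋄}(z)·r z`. -/
theorem statement_11 {ι : Type*} (m : ℕ) (g r : ℕ → ℝ) (s : ι → ℝ) (𝒥 : Finset ι)
    (hm : 1 ≤ m)
    (hg1 : 0 < g 1) (hr1 : 0 < r 1)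
    (hg : ∀ i j, 1 ≤ i → i < j → j ≤ m → g i < g j)
    (hr : ∀ i j, 1 ≤ i → i < j → j ≤ m → r i < r j)
    (hr8 : ∀ z, 1 ≤ z → z ≤ m → ∃ n : ℤ, r z = (8 : ℝ) ^ n)
    (hJ : 𝒥.Nonempty)
    (hs : ∀ J ∈ 𝒥, 0 < s J ∧ s J ≤ g m) :
    Feasible m g s 𝒥 (fun z => ⌈cn m g r s 𝒥 (zdia m g r s 𝒥) z⌉₊) ∧
    cost m r (fun z => ⌈cn m g r s 𝒥 (zdia m g r s 𝒥) z⌉₊)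
      ≤ 8 / 7 * (∑ z ∈ TIcc m g r (zdia m g r s 𝒥),
          cn m g r s 𝒥 (zdia m g r s 𝒥) z * r z) :=
  statement_11_general m g r s 𝒥 hm hg1 hg hr hr8 hJ hs

end BSHM
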